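/- Let V' ⊂ ℝⁿ⁻¹ be open and bounded, let h, h_p : V' → ℝ be measurable with h ≤ h_p pointwise, and suppose F ∈ H¹(ℝⁿ). Then ∫_{V'} |F(z, h_p(z)) - F(z, h(z))|² dz ≤ sup_{z∈V'} |h_p(z) - h(z)| · ‖F‖²_{H¹(ℝⁿ)}, provided F is (a.e. representative) absolutely continuous on almost every vertical line. (Here F(z,t) denotes evaluation of a precise representative.) -/

import Mathlib

/-! On each vertical line, Cauchy–Schwarz bounds `‖∫_{h z}^{h_p z} G(z,t) dt‖²` by
`(h_p z - h z) ∫ ‖G(z,t)‖² dt`; integrating over `V'` and applying Fubini gives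
the estimate. -/

open MeasureTheory Set

theorem norm_integral_sq_le_measureReal_mul {α E : Type*} [MeasurableSpace α]
    [NormedAddCommGroup E] [NormedSpace ℝ E] {μ : Measure α} [IsFiniteMeasure μ] {f : α → E}
    (hf : Integrable (fun x => ‖f x‖ ^ 2) μ) :
    ‖∫ x, f x ∂μ‖ ^ 2 ≤ μ.real univ * ∫ x, ‖f x‖ ^ 2 ∂μ := by
  by_cases hfi : Integrable f μ
  swap
  · rw [integral_undef hfi, norm_zero, zero_pow two_ne_zero]
    exact mul_nonneg measureReal_nonneg (integral_nonneg fun _ => sq_nonneg _)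
  have hf2 : MemLp (fun x => ‖f x‖) (ENNReal.ofReal 2) μ := by
    rw [ENNReal.ofReal_ofNat]
    exact (memLp_two_iff_integrable_sq hfi.norm.aestronglyMeasurable).2 hf
  have holder := integral_mul_norm_le_Lp_mul_Lq Real.HolderConjugate.two_two hf2
    (memLp_const (1 : ℝ))
  simp only [norm_norm, norm_one, one_pow, mul_one, integral_const, smul_eq_mul, Real.rpow_two,
    ← Real.sqrt_eq_rpow] at holder
  calc ‖∫ x, f x ∂μ‖ ^ 2 ≤ (∫ x, ‖f x‖ ∂μ) ^ 2 := by
        gcongr; exact norm_integral_le_integral_norm f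
    _ ≤ (√(∫ x, ‖f x‖ ^ 2 ∂μ) * √(μ.real univ)) ^ 2 := by
        gcongr
    _ = μ.real univ * ∫ x, ‖f x‖ ^ 2 ∂μ := by
        rw [mul_pow, Real.sq_sqrt (integral_nonneg fun _ => sq_nonneg _),
          Real.sq_sqrt measureReal_nonneg, mul_comm]

theorem norm_intervalIntegral_sq_le {E : Type*} [NormedAddCommGroup E] [NormedSpace ℝ E]
    {a b : ℝ} (hab : a ≤ b) {f : ℝ → E}
    (hf : IntegrableOn (fun t => ‖f t‖ ^ 2) (Ioc a b)) :
    ‖∫ t in a..b, f t‖ ^ 2 ≤ (b - a) * ∫ t in a..b, ‖f t‖ ^ 2 := by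
  have : Fact (volume (Ioc a b) < ⊤) := ⟨by simp⟩
  rw [intervalIntegral.integral_of_le hab, intervalIntegral.integral_of_le hab]
  simpa [Real.volume_real_Ioc_of_le hab] using norm_integral_sq_le_measureReal_mul hf

theorem abs_sub_le_biSup_of_bounded {α : Type*} {s : Set α} {f g : α → ℝ}
    (hf : ∃ c, ∀ x ∈ s, |f x| ≤ c) (hg : ∃ c, ∀ x ∈ s, |g x| ≤ c) {x : α} (hx : x ∈ s) :
    |f x - g x| ≤ ⨆ y ∈ s, |f y - g y| := by
  obtain ⟨c, hc⟩ := hf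
  obtain ⟨d, hd⟩ := hg
  refine le_ciSup₂ (f := fun y (_ : y ∈ s) => |f y - g y|) ⟨c + d, ?_⟩ x hx
  rintro _ ⟨_, ⟨y, rfl⟩, ⟨hy, rfl⟩⟩
  exact (abs_sub _ _).trans (add_le_add (hc y hy) (hd y hy))

theorem setIntegral_norm_sq_intervalIntegral_le {α E : Type*} [MeasurableSpace α]
    [NormedAddCommGroup E] [NormedSpace ℝ E] {μ : Measure α} [SFinite μ] {s : Set α}
    (hs : MeasurableSet s) {a b : α → ℝ} (hab : ∀ z ∈ s, a z ≤ b z) {M : ℝ} (hM₀ : 0 ≤ M)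
    (hM : ∀ z ∈ s, b z - a z ≤ M) {G : α × ℝ → E}
    (hG : Integrable (fun x => ‖G x‖ ^ 2) (μ.prod volume)) :
    ∫ z in s, ‖∫ t in a z..b z, G (z, t)‖ ^ 2 ∂μ ≤ M * ∫ x, ‖G x‖ ^ 2 ∂(μ.prod volume) := by
  set I : α → ℝ := fun z => ∫ t, ‖G (z, t)‖ ^ 2
  have hI : Integrable I μ := hG.integral_prod_left
  have hI₀ : ∀ z, 0 ≤ I z := fun z => integral_nonneg fun t => sq_nonneg _
  have slice : ∀ᵐ z ∂μ.restrict s, ‖∫ t in a z..b z, G (z, t)‖ ^ 2 ≤ M * I z := by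
    filter_upwards [ae_restrict_of_ae hG.prod_right_ae, ae_restrict_mem hs] with z hGz hz
    calc ‖∫ t in a z..b z, G (z, t)‖ ^ 2
        ≤ (b z - a z) * ∫ t in a z..b z, ‖G (z, t)‖ ^ 2 :=
          norm_intervalIntegral_sq_le (hab z hz) hGz.integrableOn
      _ ≤ M * I z := by
          rw [intervalIntegral.integral_of_le (hab z hz)]
          exact mul_le_mul (hM z hz)
            (setIntegral_le_integral hGz (.of_forall fun t => sq_nonneg _))
            (integral_nonneg fun t => sq_nonneg _) hM₀
  calc ∫ z in s, ‖∫ t in a z..b z, G (z, t)‖ ^ 2 ∂μ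
      ≤ ∫ z in s, M * I z ∂μ :=
        integral_mono_of_nonneg (.of_forall fun z => sq_nonneg _) (hI.const_mul M).integrableOn
          slice
    _ ≤ M * ∫ z, I z ∂μ := by
        rw [integral_const_mul]
        exact mul_le_mul_of_nonneg_left (setIntegral_le_integral hI (.of_forall hI₀)) hM₀
    _ = M * ∫ x, ‖G x‖ ^ 2 ∂(μ.prod volume) := by rw [integral_prod _ hG]

theorem stmt3_general {n : ℕ}
    (V' : Set (Fin (n - 1) → ℝ)) (hV'open : IsOpen V')
    (h hp : (Fin (n - 1) → ℝ) → ℝ)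
    (hbddh : ∃ c, ∀ z ∈ V', |h z| ≤ c) (hbddhp : ∃ c, ∀ z ∈ V', |hp z| ≤ c)
    (hle : ∀ z, h z ≤ hp z)
    (F G : (Fin (n - 1) → ℝ) × ℝ → ℂ)
    (hG : Integrable (fun x => ‖G x‖ ^ 2) (volume : Measure ((Fin (n - 1) → ℝ) × ℝ)))
    (hFTC : ∀ᵐ z ∂(volume.restrict V'),
      F (z, hp z) - F (z, h z) = ∫ t in (h z)..(hp z), G (z, t))
    (H1normSq : ℝ)
    (hH1 : (∫ x, ‖G x‖ ^ 2 ∂(volume : Measure ((Fin (n - 1) → ℝ) × ℝ))) ≤ H1normSq) :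
    ∫ z in V', ‖F (z, hp z) - F (z, h z)‖ ^ 2
      ≤ (⨆ z ∈ V', |hp z - h z|) * H1normSq := by
  have hM₀ : 0 ≤ ⨆ z ∈ V', |hp z - h z| :=
    Real.iSup_nonneg fun z => Real.iSup_nonneg fun _ => abs_nonneg _
  have hM : ∀ z ∈ V', hp z - h z ≤ ⨆ z ∈ V', |hp z - h z| := fun z hz =>
    (le_abs_self _).trans (abs_sub_le_biSup_of_bounded hbddhp hbddh hz)
  calc ∫ z in V', ‖F (z, hp z) - F (z, h z)‖ ^ 2
      = ∫ z in V', ‖∫ t in h z..hp z, G (z, t)‖ ^ 2 :=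
        integral_congr_ae (hFTC.mono fun z hz => congrArg (‖·‖ ^ 2) hz)
    _ ≤ (⨆ z ∈ V', |hp z - h z|) * ∫ x, ‖G x‖ ^ 2 :=
        setIntegral_norm_sq_intervalIntegral_le hV'open.measurableSet (fun z _ => hle z) hM₀ hM
          hG
    _ ≤ (⨆ z ∈ V', |hp z - h z|) * H1normSq := mul_le_mul_of_nonneg_left hH1 hM₀

/-- If `F ∈ H¹(ℝⁿ)` (encoded via a function `F` on `ℝⁿ⁻¹ × ℝ` whose
distributional `n`-th partial derivative is `G ∈ L²` and which is absolutely continuous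
on a.e. vertical line, so that `F(z,h_p(z)) - F(z,h(z)) = ∫_{h(z)}^{h_p(z)} G(z,t) dt`),
and `h ≤ h_p` are bounded measurable on a bounded open `V' ⊂ ℝⁿ⁻¹`, then
`∫_{V'} |F(z,h_p(z)) - F(z,h(z))|² dz ≤ sup_{V'} |h_p - h| ⋅ ‖F‖²_{H¹}`,
where `‖F‖²_{H¹}` is any bound dominating `∫ |G|²`. -/
theorem stmt3 {n : ℕ} (hn : 2 ≤ n)
    (V' : Set (Fin (n - 1) → ℝ)) (hV'open : IsOpen V') (hV'bdd : Bornology.IsBounded V')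
    (h hp : (Fin (n - 1) → ℝ) → ℝ) (hmeas : Measurable h) (hpmeas : Measurable hp)
    (hbddh : ∃ c, ∀ z ∈ V', |h z| ≤ c) (hbddhp : ∃ c, ∀ z ∈ V', |hp z| ≤ c)
    (hle : ∀ z, h z ≤ hp z)
    (F G : (Fin (n - 1) → ℝ) × ℝ → ℂ)
    (hG : Integrable (fun x => ‖G x‖ ^ 2) (volume : Measure ((Fin (n - 1) → ℝ) × ℝ)))
    (hFTC : ∀ᵐ z ∂(volume.restrict V'),
      F (z, hp z) - F (z, h z) = ∫ t in (h z)..(hp z), G (z, t))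
    (H1normSq : ℝ)
    (hH1 : (∫ x, ‖G x‖ ^ 2 ∂(volume : Measure ((Fin (n - 1) → ℝ) × ℝ))) ≤ H1normSq) :
    ∫ z in V', ‖F (z, hp z) - F (z, h z)‖ ^ 2
      ≤ (⨆ z ∈ V', |hp z - h z|) * H1normSq :=
  stmt3_general V' hV'open h hp hbddh hbddhp hle F G hG hFTC H1normSq hH1
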